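/- arXiv:2509.04116 — 5 statements merged into one kernel-verified Lean document; each statement's English description precedes it below -/
import Mathlib

section
/- For a finite set Θ, a nominal probability distribution μ on Θ, a radius R ∈ [0,1], and a function L : Θ → ℝ, the supremum of ∑_θ ν(θ)L(θ) over all probability distributions ν on Θ satisfying the total variation constraint (1/2)∑_θ |ν(θ) − μ(θ)| ≤ R is at most ∑_θ μ(θ)L(θ) + R·(max_θ L(θ) − min_θ L(θ)). -/
open Finset

/-- A probability distribution on a finite type: nonnegative and summing to 1. -/
def IsProbDist {Θ : Type*} [Fintype Θ] (μ : Θ → ℝ) : Prop :=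
  (∀ θ, 0 ≤ μ θ) ∧ ∑ θ, μ θ = 1

/-- Total variation distance between two functions on a finite type. -/
noncomputable def tvDist {Θ : Type*} [Fintype Θ] (ν μ : Θ → ℝ) : ℝ :=
  (1 / 2) * ∑ θ, |ν θ - μ θ|

/-! Since `ν - μ` has total mass zero, `∑ (ν - μ) L` is unchanged when `L` is shifted to be
centred at the midpoint of its range; the shifted function is bounded by half the oscillation
`max L - min L`, and `∑ |ν - μ|` is twice the total variation distance. -/

section Oscillation

variable {ι : Type*} {s : Finset ι}

theorem abs_sub_midpoint_le_of_mem (hs : s.Nonempty) (f : ι → ℝ) {i : ι} (hi : i ∈ s) :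
    |f i - (s.inf' hs f + s.sup' hs f) / 2| ≤ (s.sup' hs f - s.inf' hs f) / 2 := by
  have hinf := s.inf'_le f hi
  have hsup := s.le_sup' f hi
  rw [abs_le]
  constructor <;> linarith

theorem sum_mul_sub_sum_mul_eq_sum_sub_mul_sub {ν μ : ι → ℝ}
    (h : ∑ i ∈ s, ν i = ∑ i ∈ s, μ i) (f : ι → ℝ) (c : ℝ) :
    ∑ i ∈ s, ν i * f i - ∑ i ∈ s, μ i * f i = ∑ i ∈ s, (ν i - μ i) * (f i - c) := by
  simp only [sub_mul, mul_sub, sum_sub_distrib, ← sum_mul, h]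
  ring

theorem sum_mul_sub_sum_mul_le_of_sum_eq (hs : s.Nonempty) {ν μ : ι → ℝ}
    (h : ∑ i ∈ s, ν i = ∑ i ∈ s, μ i) (f : ι → ℝ) :
    ∑ i ∈ s, ν i * f i - ∑ i ∈ s, μ i * f i ≤
      (s.sup' hs f - s.inf' hs f) / 2 * ∑ i ∈ s, |ν i - μ i| := by
  rw [sum_mul_sub_sum_mul_eq_sum_sub_mul_sub h f ((s.inf' hs f + s.sup' hs f) / 2), mul_sum]
  refine sum_le_sum fun i hi => ?_
  calc (ν i - μ i) * (f i - (s.inf' hs f + s.sup' hs f) / 2)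
      ≤ |ν i - μ i| * |f i - (s.inf' hs f + s.sup' hs f) / 2| := by
        rw [← abs_mul]
        exact le_abs_self _
    _ ≤ |ν i - μ i| * ((s.sup' hs f - s.inf' hs f) / 2) := by
        gcongr
        exact abs_sub_midpoint_le_of_mem hs f hi
    _ = (s.sup' hs f - s.inf' hs f) / 2 * |ν i - μ i| := mul_comm _ _

end Oscillation

theorem stmt0_general {Θ : Type*} [Fintype Θ] [Nonempty Θ]
    (μ : Θ → ℝ) (hμ : IsProbDist μ) (R : ℝ)
    (L : Θ → ℝ) :
    ∀ ν : Θ → ℝ, IsProbDist ν → tvDist ν μ ≤ R →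
      ∑ θ, ν θ * L θ ≤ ∑ θ, μ θ * L θ +
        R * (Finset.univ.sup' Finset.univ_nonempty L -
             Finset.univ.inf' Finset.univ_nonempty L) := by
  intro ν hν htv
  have hdiff := sum_mul_sub_sum_mul_le_of_sum_eq univ_nonempty (hν.2.trans hμ.2.symm) L
  set osc := univ.sup' univ_nonempty L - univ.inf' univ_nonempty L
  have hosc : 0 ≤ osc :=
    sub_nonneg.2 ((inf'_le L (mem_univ (Classical.arbitrary Θ))).trans (le_sup' L (mem_univ _)))
  have htv_eq : osc / 2 * ∑ θ, |ν θ - μ θ| = osc * tvDist ν μ := by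
    unfold tvDist
    ring
  linarith [mul_le_mul_of_nonneg_left htv hosc]

theorem stmt0 {Θ : Type*} [Fintype Θ] [Nonempty Θ]
    (μ : Θ → ℝ) (hμ : IsProbDist μ) (R : ℝ) (hR : R ∈ Set.Icc (0 : ℝ) 1)
    (L : Θ → ℝ) :
    ∀ ν : Θ → ℝ, IsProbDist ν → tvDist ν μ ≤ R →
      ∑ θ, ν θ * L θ ≤ ∑ θ, μ θ * L θ +
        R * (Finset.univ.sup' Finset.univ_nonempty L -
             Finset.univ.inf' Finset.univ_nonempty L) :=
  stmt0_general μ hμ R L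
end

section
/- For a finite set Θ, a nominal probability distribution μ on Θ, a radius R ∈ [0,1], and a function L : Θ → ℝ, let α = min(R, 1 − ∑_{θ ∈ Θmax} μ(θ)), where Θmax is the set of maximizers of L. If α ≤ ∑_{θ ∈ Θmin} μ(θ), where Θmin is the set of minimizers of L, then the supremum of ∑_θ ν(θ)L(θ) over probability distributions ν with (1/2)∑_θ|ν(θ)−μ(θ)| ≤ R equals ∑_θ μ(θ)L(θ) + α·(max_θ L(θ) − min_θ L(θ)). -/
open Finset

/-!
The gain `∑ ν L - ∑ μ L = ∑ (ν - μ) (L - min L)` is at most the transported mass `tvDist ν μ ≤ R`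
times the range `max L - min L`; it is also at most `max L - ∑ μ L`, which is at most
`(1 - μ(Θmax)) (max L - min L)`. Conversely, taking mass `α` from `Θmin` proportionally to `μ`
(possible because `α ≤ μ(Θmin)`) and putting it on a maximiser moves `α` in total variation
and gains exactly `α (max L - min L)`.
-/

section

variable {Θ : Type*} [Fintype Θ]

theorem tvDist_self (μ : Θ → ℝ) : tvDist μ μ = 0 := by
  simp [tvDist]

theorem tvDist_eq_sum_posPart {ν μ : Θ → ℝ} (h : ∑ θ, ν θ = ∑ θ, μ θ) :
    tvDist ν μ = ∑ θ, (ν θ - μ θ)⁺ := by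
  have hsum : ∑ θ, ((ν θ - μ θ)⁺ - (ν θ - μ θ)⁻) = 0 := by
    simp only [posPart_sub_negPart, sum_sub_distrib, h, sub_self]
  rw [sum_sub_distrib] at hsum
  simp only [tvDist, ← posPart_add_negPart, sum_add_distrib]
  linarith

theorem sum_mul_sub_sum_mul_le_tvDist_mul {ν μ L : Θ → ℝ} {a b : ℝ}
    (h : ∑ θ, ν θ = ∑ θ, μ θ) (hL : ∀ θ, L θ ∈ Set.Icc a b) :
    ∑ θ, ν θ * L θ - ∑ θ, μ θ * L θ ≤ tvDist ν μ * (b - a) :=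
  calc ∑ θ, ν θ * L θ - ∑ θ, μ θ * L θ = ∑ θ, (ν θ - μ θ) * (L θ - a) := by
        simp only [sub_mul, mul_sub, sum_sub_distrib, ← sum_mul, h]
        ring
    _ ≤ ∑ θ, (ν θ - μ θ)⁺ * (b - a) := sum_le_sum fun θ _ => by
        obtain ⟨ha, hb⟩ := hL θ
        calc (ν θ - μ θ) * (L θ - a) ≤ (ν θ - μ θ)⁺ * (L θ - a) :=
              mul_le_mul_of_nonneg_right (le_posPart _) (sub_nonneg.2 ha)
          _ ≤ (ν θ - μ θ)⁺ * (b - a) :=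
              mul_le_mul_of_nonneg_left (by linarith) (posPart_nonneg _)
    _ = tvDist ν μ * (b - a) := by rw [tvDist_eq_sum_posPart h, sum_mul]

theorem sum_mul_le_of_forall_le {ν L : Θ → ℝ} {b : ℝ} (hν : IsProbDist ν)
    (hL : ∀ θ, L θ ≤ b) : ∑ θ, ν θ * L θ ≤ b :=
  calc ∑ θ, ν θ * L θ ≤ ∑ θ, ν θ * b :=
        sum_le_sum fun θ _ => mul_le_mul_of_nonneg_left (hL θ) (hν.1 θ)
    _ = b := by rw [← sum_mul, hν.2, one_mul]

theorem sum_filter_mul_le_sum_mul_sub {μ L : Θ → ℝ} {a b : ℝ} (hμ : IsProbDist μ)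
    (hL : ∀ θ, L θ ∈ Set.Icc a b) :
    (∑ θ ∈ univ.filter (L · = b), μ θ) * (b - a) ≤ ∑ θ, μ θ * L θ - a :=
  calc (∑ θ ∈ univ.filter (L · = b), μ θ) * (b - a)
      = ∑ θ ∈ univ.filter (L · = b), μ θ * (L θ - a) := by
        rw [sum_mul]
        exact sum_congr rfl fun θ hθ => by rw [(mem_filter.1 hθ).2]
    _ ≤ ∑ θ, μ θ * (L θ - a) :=
        sum_le_sum_of_subset_of_nonneg (filter_subset _ _) fun θ _ _ =>
          mul_nonneg (hμ.1 θ) (sub_nonneg.2 (hL θ).1)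
    _ = ∑ θ, μ θ * L θ - a := by
        simp only [mul_sub, sum_sub_distrib, ← sum_mul, hμ.2, one_mul]

theorem sum_mul_le_add_min_mul {ν μ L : Θ → ℝ} {a b R : ℝ} (hν : IsProbDist ν)
    (hμ : IsProbDist μ) (hL : ∀ θ, L θ ∈ Set.Icc a b) (hab : a ≤ b) (htv : tvDist ν μ ≤ R) :
    ∑ θ, ν θ * L θ ≤
      ∑ θ, μ θ * L θ + min R (1 - ∑ θ ∈ univ.filter (L · = b), μ θ) * (b - a) := by
  have hgain_tv : ∑ θ, ν θ * L θ - ∑ θ, μ θ * L θ ≤ R * (b - a) :=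
    (sum_mul_sub_sum_mul_le_tvDist_mul (hν.2.trans hμ.2.symm) hL).trans
      (mul_le_mul_of_nonneg_right htv (sub_nonneg.2 hab))
  have hgain_max : ∑ θ, ν θ * L θ - ∑ θ, μ θ * L θ ≤
      (1 - ∑ θ ∈ univ.filter (L · = b), μ θ) * (b - a) := by
    linarith [sum_mul_le_of_forall_le hν fun θ => (hL θ).2, sum_filter_mul_le_sum_mul_sub hμ hL]
  rw [min_mul_of_nonneg _ _ (sub_nonneg.2 hab)]
  linarith [le_min hgain_tv hgain_max]

theorem div_mul_cancel_of_nonneg_of_le {α m : ℝ} (hα : 0 ≤ α) (hαm : α ≤ m) :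
    α / m * m = α :=
  div_mul_cancel_of_imp fun hm => le_antisymm (hm ▸ hαm) hα

section ShiftMass

variable [DecidableEq Θ]

noncomputable def shiftMass (μ : Θ → ℝ) (s : Finset Θ) (θ₀ : Θ) (α : ℝ) (θ : Θ) : ℝ :=
  μ θ - (if θ ∈ s then α / (∑ x ∈ s, μ x) * μ θ else 0) + if θ = θ₀ then α else 0

theorem sum_shiftMass_mul (μ f : Θ → ℝ) (s : Finset Θ) (θ₀ : Θ) (α : ℝ) :
    ∑ θ, shiftMass μ s θ₀ α θ * f θ =
      ∑ θ, μ θ * f θ - α / (∑ x ∈ s, μ x) * ∑ θ ∈ s, μ θ * f θ + α * f θ₀ := by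
  simp only [shiftMass, add_mul, sub_mul, sum_add_distrib, sum_sub_distrib, ite_mul, zero_mul,
    sum_ite_mem, univ_inter, sum_ite_eq', mem_univ, if_true, mul_assoc, ← mul_sum]

variable {μ : Θ → ℝ} {s : Finset Θ} {θ₀ : Θ} {α : ℝ}

theorem isProbDist_shiftMass (hμ : IsProbDist μ) (hα : 0 ≤ α) (hαs : α ≤ ∑ x ∈ s, μ x) :
    IsProbDist (shiftMass μ s θ₀ α) := by
  refine ⟨fun θ => ?_, ?_⟩
  · have hc : α / ∑ x ∈ s, μ x ≤ 1 := div_le_one_of_le₀ hαs (hα.trans hαs)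
    have hmass : α / (∑ x ∈ s, μ x) * μ θ ≤ μ θ := mul_le_of_le_one_left (hμ.1 θ) hc
    unfold shiftMass
    split_ifs <;> linarith [hμ.1 θ]
  · simpa [div_mul_cancel_of_nonneg_of_le hα hαs, hμ.2] using
      sum_shiftMass_mul μ (fun _ => 1) s θ₀ α

theorem tvDist_shiftMass (hμ : IsProbDist μ) (hα : 0 ≤ α) (hαs : α ≤ ∑ x ∈ s, μ x)
    (hθ₀ : θ₀ ∉ s) : tvDist (shiftMass μ s θ₀ α) μ = α := by
  have habs : ∀ θ, |shiftMass μ s θ₀ α θ - μ θ| =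
      (if θ ∈ s then α / (∑ x ∈ s, μ x) * μ θ else 0) + if θ = θ₀ then α else 0 := by
    intro θ
    have hc : 0 ≤ α / (∑ x ∈ s, μ x) * μ θ :=
      mul_nonneg (div_nonneg hα (hα.trans hαs)) (hμ.1 θ)
    unfold shiftMass
    by_cases hθs : θ ∈ s
    · have hθ : θ ≠ θ₀ := fun h => hθ₀ (h ▸ hθs)
      simp only [hθs, hθ, if_true, if_false, add_zero, sub_sub_cancel_left, abs_neg,
        abs_of_nonneg hc]
    · split_ifs <;> simp [abs_of_nonneg hα]
  simp only [tvDist, habs, sum_add_distrib, sum_ite_mem, univ_inter, sum_ite_eq', mem_univ,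
    if_true, ← mul_sum, div_mul_cancel_of_nonneg_of_le hα hαs]
  ring

theorem sum_shiftMass_mul_of_eqOn {f : Θ → ℝ} {a : ℝ} (hα : 0 ≤ α) (hαs : α ≤ ∑ x ∈ s, μ x)
    (hf : ∀ θ ∈ s, f θ = a) :
    ∑ θ, shiftMass μ s θ₀ α θ * f θ = ∑ θ, μ θ * f θ + α * (f θ₀ - a) := by
  have hs : ∑ θ ∈ s, μ θ * f θ = (∑ x ∈ s, μ x) * a := by
    rw [sum_mul]
    exact sum_congr rfl fun θ hθ => by rw [hf θ hθ]
  rw [sum_shiftMass_mul, hs, ← mul_assoc, div_mul_cancel_of_nonneg_of_le hα hαs]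
  ring

end ShiftMass

end

open scoped Classical in
theorem stmt1 {Θ : Type*} [Fintype Θ] [Nonempty Θ]
    (μ : Θ → ℝ) (hμ : IsProbDist μ) (R : ℝ) (hR : R ∈ Set.Icc (0 : ℝ) 1)
    (L : Θ → ℝ)
    (Lmax Lmin : ℝ)
    (hLmax : Lmax = Finset.univ.sup' Finset.univ_nonempty L)
    (hLmin : Lmin = Finset.univ.inf' Finset.univ_nonempty L)
    (α : ℝ)
    (hα : α = min R (1 - ∑ θ ∈ Finset.univ.filter (fun θ => L θ = Lmax), μ θ))
    (hcase : α ≤ ∑ θ ∈ Finset.univ.filter (fun θ => L θ = Lmin), μ θ) :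
    sSup {x : ℝ | ∃ ν : Θ → ℝ, IsProbDist ν ∧ tvDist ν μ ≤ R ∧ x = ∑ θ, ν θ * L θ}
      = ∑ θ, μ θ * L θ + α * (Lmax - Lmin) := by
  obtain ⟨θ₀, -, hθ₀⟩ := exists_mem_eq_sup' univ_nonempty L
  have hL : ∀ θ, L θ ∈ Set.Icc Lmin Lmax := fun θ =>
    ⟨hLmin ▸ inf'_le L (mem_univ θ), hLmax ▸ le_sup' L (mem_univ θ)⟩
  have hab : Lmin ≤ Lmax := (hL θ₀).1.trans (hL θ₀).2
  have hα0 : 0 ≤ α := hα ▸ le_min hR.1 (sub_nonneg.2 (hμ.2 ▸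
    sum_le_sum_of_subset_of_nonneg (filter_subset _ _) fun θ _ _ => hμ.1 θ))
  refine IsGreatest.csSup_eq ⟨?_, fun x ⟨ν, hν, htv, hx⟩ =>
    hx ▸ hα ▸ sum_mul_le_add_min_mul hν hμ hL hab htv⟩
  rcases hα0.eq_or_lt with hzero | hpos
  · exact ⟨μ, hμ, (tvDist_self μ).trans_le hR.1, by rw [← hzero]; ring⟩
  have hrange : Lmin < Lmax := by
    refine hab.lt_of_ne fun heq => hpos.not_ge ?_
    have hall : univ.filter (fun θ => L θ = Lmax) = univ :=
      filter_true_of_mem fun θ _ => le_antisymm (hL θ).2 (heq ▸ (hL θ).1)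
    calc α ≤ 1 - ∑ θ ∈ univ.filter (fun θ => L θ = Lmax), μ θ := hα ▸ min_le_right _ _
      _ = 0 := by rw [hall, hμ.2, sub_self]
  have hθ₀s : θ₀ ∉ univ.filter (fun θ => L θ = Lmin) := by
    simp [← hθ₀, ← hLmax, hrange.ne']
  refine ⟨shiftMass μ _ θ₀ α, isProbDist_shiftMass hμ hα0 hcase,
    (tvDist_shiftMass hμ hα0 hcase hθ₀s).trans_le (hα ▸ min_le_left _ _), ?_⟩
  rw [sum_shiftMass_mul_of_eqOn hα0 hcase fun θ hθ => (mem_filter.1 hθ).2, ← hθ₀, ← hLmax]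
end

section
/- Let Θ be a finite set, μ a probability distribution on Θ, R ∈ [0,1], and L : Θ → ℝ nonconstant. Define Θmax as the set of maximizers of L, Θmin as the set of minimizers, α = min(R, 1 − μ(Θmax)), and suppose α ≤ μ(Θmin). Define ν* by ν*(θ) = μ(θ) + α·μ(θ)/μ(Θmax) for θ ∈ Θmax (assuming μ(Θmax) > 0), ν*(θ) = μ(θ) − α·μ(θ)/μ(Θmin) for θ ∈ Θmin (assuming μ(Θmin) > 0), and ν*(θ) = μ(θ) otherwise. Then ν* is a probability distribution on Θ lying in the total variation ball of radius R around μ. -/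
open Finset

/-
Moving mass α from the minimizers to the maximizers, proportionally to μ on each side, changes the
total mass by α - α = 0 and keeps every weight nonnegative because α ≤ μ(Θmin). The two sets are
disjoint since L is nonconstant, so the mass moved is counted once on each side and the total
variation distance is exactly (α + α) / 2 = α ≤ R.
-/

section MassShift

variable {Θ : Type*}

noncomputable def massShift [DecidableEq Θ] (μ : Θ → ℝ) (s t : Finset Θ) (α : ℝ) (θ : Θ) : ℝ :=
  if θ ∈ s then μ θ + α * μ θ / ∑ x ∈ s, μ x
  else if θ ∈ t then μ θ - α * μ θ / ∑ x ∈ t, μ x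
  else μ θ

lemma sum_mul_div_sum_self {μ : Θ → ℝ} {s : Finset Θ} (hs : ∑ x ∈ s, μ x ≠ 0) (c : ℝ) :
    ∑ θ ∈ s, c * μ θ / ∑ x ∈ s, μ x = c := by
  rw [← sum_div, ← mul_sum, mul_div_assoc, div_self hs, mul_one]

variable [DecidableEq Θ] {μ : Θ → ℝ} {s t : Finset Θ} {α : ℝ}

lemma massShift_sub_self (hst : Disjoint s t) (θ : Θ) :
    massShift μ s t α θ - μ θ =
      (if θ ∈ s then α * μ θ / ∑ x ∈ s, μ x else 0)
        - (if θ ∈ t then α * μ θ / ∑ x ∈ t, μ x else 0) := by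
  unfold massShift
  by_cases hs : θ ∈ s
  · simp [hs, disjoint_left.1 hst hs]
  · by_cases ht : θ ∈ t <;> simp [hs, ht]

lemma abs_massShift_sub_self (hst : Disjoint s t) (hμ : ∀ θ, 0 ≤ μ θ) (hα : 0 ≤ α) (θ : Θ) :
    |massShift μ s t α θ - μ θ| =
      (if θ ∈ s then α * μ θ / ∑ x ∈ s, μ x else 0)
        + (if θ ∈ t then α * μ θ / ∑ x ∈ t, μ x else 0) := by
  have hs_nonneg : 0 ≤ ∑ x ∈ s, μ x := sum_nonneg fun x _ => hμ x
  have ht_nonneg : 0 ≤ ∑ x ∈ t, μ x := sum_nonneg fun x _ => hμ x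
  have := hμ θ
  rw [massShift_sub_self hst]
  by_cases hs : θ ∈ s
  · simp only [hs, disjoint_left.1 hst hs, if_true, if_false, sub_zero, add_zero]
    exact abs_of_nonneg (by positivity)
  · by_cases ht : θ ∈ t
    · simp only [hs, ht, if_true, if_false, zero_sub, zero_add, abs_neg]
      exact abs_of_nonneg (by positivity)
    · simp [hs, ht]

lemma sum_massShift [Fintype Θ] (hst : Disjoint s t) (hs : ∑ x ∈ s, μ x ≠ 0)
    (ht : ∑ x ∈ t, μ x ≠ 0) :
    ∑ θ, massShift μ s t α θ = ∑ θ, μ θ := by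
  rw [← sub_eq_zero, ← sum_sub_distrib]
  simp only [massShift_sub_self hst, sum_sub_distrib, sum_ite_mem, univ_inter,
    sum_mul_div_sum_self hs, sum_mul_div_sum_self ht, sub_self]

lemma massShift_nonneg (hμ : ∀ θ, 0 ≤ μ θ) (ht : 0 < ∑ x ∈ t, μ x) (hα : 0 ≤ α)
    (hαt : α ≤ ∑ x ∈ t, μ x) (θ : Θ) : 0 ≤ massShift μ s t α θ := by
  have hs_nonneg : 0 ≤ ∑ x ∈ s, μ x := sum_nonneg fun x _ => hμ x
  have := hμ θ
  unfold massShift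
  split_ifs
  · positivity
  · rw [sub_nonneg, div_le_iff₀ ht]
    rw [mul_comm]
    exact mul_le_mul_of_nonneg_left hαt (hμ θ)
  · exact hμ θ

lemma tvDist_massShift [Fintype Θ] (hst : Disjoint s t) (hμ : ∀ θ, 0 ≤ μ θ) (hα : 0 ≤ α)
    (hs : ∑ x ∈ s, μ x ≠ 0) (ht : ∑ x ∈ t, μ x ≠ 0) :
    tvDist (massShift μ s t α) μ = α := by
  simp only [tvDist, abs_massShift_sub_self hst hμ hα, sum_add_distrib, sum_ite_mem,
    univ_inter, sum_mul_div_sum_self hs, sum_mul_div_sum_self ht]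
  ring

end MassShift

lemma Finset.inf'_lt_sup'_of_ne {ι α : Type*} [LinearOrder α] {s : Finset ι} (hs : s.Nonempty)
    {f : ι → α} {i j : ι} (hi : i ∈ s) (hj : j ∈ s) (hij : f i ≠ f j) :
    s.inf' hs f < s.sup' hs f := by
  rcases hij.lt_or_gt with h | h
  · exact (s.inf'_le f hi).trans_lt (h.trans_le (s.le_sup' f hj))
  · exact (s.inf'_le f hj).trans_lt (h.trans_le (s.le_sup' f hi))

open scoped Classical in
theorem stmt2 {Θ : Type*} [Fintype Θ] [Nonempty Θ]
    (μ : Θ → ℝ) (hμ : IsProbDist μ) (R : ℝ) (hR : R ∈ Set.Icc (0 : ℝ) 1)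
    (L : Θ → ℝ) (hL : ∃ θ θ' : Θ, L θ ≠ L θ')
    (Lmax Lmin : ℝ)
    (hLmax : Lmax = Finset.univ.sup' Finset.univ_nonempty L)
    (hLmin : Lmin = Finset.univ.inf' Finset.univ_nonempty L)
    (Mmax Mmin : ℝ)
    (hMmax : Mmax = ∑ θ ∈ Finset.univ.filter (fun θ => L θ = Lmax), μ θ)
    (hMmin : Mmin = ∑ θ ∈ Finset.univ.filter (fun θ => L θ = Lmin), μ θ)
    (hMmaxpos : 0 < Mmax) (hMminpos : 0 < Mmin)
    (α : ℝ) (hα : α = min R (1 - Mmax)) (hcase : α ≤ Mmin)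
    (νstar : Θ → ℝ)
    (hν : νstar = fun θ =>
      if L θ = Lmax then μ θ + α * μ θ / Mmax
      else if L θ = Lmin then μ θ - α * μ θ / Mmin
      else μ θ) :
    IsProbDist νstar ∧ tvDist νstar μ ≤ R := by
  obtain ⟨hμ0, hμ1⟩ := hμ
  obtain ⟨θ, θ', hθ⟩ := hL
  have hmin_lt_max : Lmin < Lmax := hLmin ▸ hLmax ▸
    univ.inf'_lt_sup'_of_ne univ_nonempty (mem_univ θ) (mem_univ θ') hθ
  have hdisj : Disjoint (univ.filter fun θ => L θ = Lmax) (univ.filter fun θ => L θ = Lmin) :=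
    disjoint_filter.2 fun _ _ hmax hmin => hmin_lt_max.ne' (hmax.symm.trans hmin)
  have hMmax_le : Mmax ≤ 1 := hMmax ▸ hμ1 ▸
    sum_le_sum_of_subset_of_nonneg (filter_subset _ _) fun x _ _ => hμ0 x
  have hα0 : 0 ≤ α := hα ▸ le_min hR.1 (by linarith)
  have hshift : νstar = massShift μ (univ.filter fun θ => L θ = Lmax)
      (univ.filter fun θ => L θ = Lmin) α := by
    ext; simp [hν, massShift, ← hMmax, ← hMmin]
  subst hMmax hMmin
  rw [hshift, tvDist_massShift hdisj hμ0 hα0 hMmaxpos.ne' hMminpos.ne']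
  exact ⟨⟨massShift_nonneg hμ0 hMminpos hα0 hcase, hμ1 ▸ sum_massShift hdisj hMmaxpos.ne'
    hMminpos.ne'⟩, hα ▸ min_le_left _ _⟩
end

section
/- Let p_1,…,p_m be probability measures on ℝ^n with finite second moments, B a nonempty convex compact subset of the probability simplex in ℝ^m, and V(c,ν) = ∑_i ν(i)∫‖x−c‖² dp_i(x). Then min over c ∈ ℝ^n of max over ν ∈ B of V(c,ν) equals max over ν ∈ B of min over c ∈ ℝ^n of V(c,ν) (the minimax equality / strong duality holds). -/
/-!
On the simplex, `V c ν = A ν - 2 ⟪b ν, c⟫ + ‖c‖²`, where `A ν = ∑ ν i E_{p i}‖x‖²` and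
`b ν = ∑ ν i E_{p i} x` are affine in `ν`. Completing the square,
`V c ν = f ν + ‖c - b ν‖²` with `f ν = A ν - ‖b ν‖²`, so `min_c V c ν = f ν`, attained at
`c = b ν`. Let `ν₀` maximise `f` on the compact convex set `B`. The first-order condition for
`f` at `ν₀` says exactly that the affine function `V (b ν₀) ·` is also maximised on `B` at `ν₀`.
Hence `(b ν₀, ν₀)` is a saddle point of `V`, and both sides of the minimax equality equal `f ν₀`.
-/

open MeasureTheory Set Filter Topology
open scoped RealInnerProductSpace

theorem iInf_iSup_eq_iSup_iInf_of_saddle {α β γ : Type*} [ConditionallyCompleteLattice γ]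
    {F : α → β → γ} {a₀ : α} {b₀ : β}
    (hmax : ∀ b, F a₀ b ≤ F a₀ b₀) (hmin : ∀ a, F a₀ b₀ ≤ F a b₀)
    (hbddAbove : ∀ a, BddAbove (range (F a))) (hbddBelow : ∀ b, BddBelow (range (F · b))) :
    ⨅ a, ⨆ b, F a b = ⨆ b, ⨅ a, F a b := by
  have : Nonempty α := ⟨a₀⟩
  have : Nonempty β := ⟨b₀⟩
  have hsup_ge : ∀ a, F a₀ b₀ ≤ ⨆ b, F a b := fun a =>
    (hmin a).trans (le_ciSup (hbddAbove a) b₀)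
  have hinf_le : ∀ b, ⨅ a, F a b ≤ F a₀ b₀ := fun b =>
    (ciInf_le (hbddBelow b) a₀).trans (hmax b)
  have hleft : ⨅ a, ⨆ b, F a b = F a₀ b₀ :=
    le_antisymm ((ciInf_le ⟨F a₀ b₀, forall_mem_range.2 hsup_ge⟩ a₀).trans (ciSup_le hmax))
      (le_ciInf hsup_ge)
  have hright : ⨆ b, ⨅ a, F a b = F a₀ b₀ :=
    le_antisymm (ciSup_le hinf_le)
      ((le_ciInf hmin).trans (le_ciSup ⟨F a₀ b₀, forall_mem_range.2 hinf_le⟩ b₀))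
  rw [hleft, hright]

theorem nonpos_of_forall_le_mul {L a : ℝ} (h : ∀ t ∈ Ioc (0 : ℝ) 1, L ≤ t * a) : L ≤ 0 := by
  have hlim : Tendsto (fun t : ℝ => t * a) (𝓝[>] 0) (𝓝 0) := by
    simpa using (tendsto_id.mul_const a).mono_left (nhdsWithin_le_nhds (a := (0 : ℝ)))
  exact ge_of_tendsto hlim (eventually_of_mem (Ioc_mem_nhdsGT one_pos) h)

section QuadraticPayoff

variable {X E : Type*} [AddCommGroup X] [Module ℝ X] [NormedAddCommGroup E]
  [InnerProductSpace ℝ E]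

theorem sub_two_mul_inner_add_norm_sq (a : ℝ) (x c : E) :
    a - 2 * ⟪x, c⟫ + ‖c‖ ^ 2 = a - ‖x‖ ^ 2 + ‖c - x‖ ^ 2 := by
  rw [norm_sub_sq_real, real_inner_comm]
  ring

theorem sub_le_two_mul_inner_of_isMaxOn {A : X →ᵃ[ℝ] ℝ} {b : X →ᵃ[ℝ] E} {B : Set X}
    (hB : Convex ℝ B) {ν₀ ν : X} (hν₀ : ν₀ ∈ B) (hν : ν ∈ B)
    (hmax : IsMaxOn (fun ν => A ν - ‖b ν‖ ^ 2) B ν₀) :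
    A ν - A ν₀ ≤ 2 * ⟪b ν₀, b ν - b ν₀⟫ := by
  set w := b ν - b ν₀
  suffices ∀ t ∈ Ioc (0 : ℝ) 1, A ν - A ν₀ - 2 * ⟪b ν₀, w⟫ ≤ t * ‖w‖ ^ 2 by
    linarith [nonpos_of_forall_le_mul this]
  rintro t ⟨ht0, ht1⟩
  -- on the segment, `f = f ν₀ + t (A ν - A ν₀ - 2 ⟪b ν₀, w⟫) - t² ‖w‖²`
  have hle : A (AffineMap.lineMap ν₀ ν t) - ‖b (AffineMap.lineMap ν₀ ν t)‖ ^ 2 ≤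
      A ν₀ - ‖b ν₀‖ ^ 2 :=
    hmax (hB.lineMap_mem hν₀ hν ⟨ht0.le, ht1⟩)
  rw [AffineMap.apply_lineMap, AffineMap.apply_lineMap, AffineMap.lineMap_apply_ring',
    AffineMap.lineMap_apply_module', add_comm, norm_add_sq_real, real_inner_smul_left,
    real_inner_comm, norm_smul, Real.norm_of_nonneg ht0.le] at hle
  nlinarith

theorem iInf_iSup_quadratic_eq_iSup_iInf [TopologicalSpace X] {B : Set X} (hne : B.Nonempty)
    (hconv : Convex ℝ B) (hcomp : IsCompact B) (A : X →ᴬ[ℝ] ℝ) (b : X →ᴬ[ℝ] E) :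
    ⨅ c : E, ⨆ ν : B, (A ν - 2 * ⟪b ν, c⟫ + ‖c‖ ^ 2)
      = ⨆ ν : B, ⨅ c : E, (A ν - 2 * ⟪b ν, c⟫ + ‖c‖ ^ 2) := by
  obtain ⟨ν₀, hν₀, hmax⟩ := hcomp.exists_isMaxOn hne
    (A.continuous.sub (b.continuous.norm.pow 2)).continuousOn
  refine iInf_iSup_eq_iSup_iInf_of_saddle (a₀ := b ν₀) (b₀ := ⟨ν₀, hν₀⟩) ?_ ?_ ?_ ?_
  · rintro ⟨ν, hν⟩
    have := sub_le_two_mul_inner_of_isMaxOn (A := A.toAffineMap) (b := b.toAffineMap)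
      hconv hν₀ hν hmax
    simp only [ContinuousAffineMap.coe_toAffineMap, inner_sub_right,
      real_inner_self_eq_norm_sq] at this
    dsimp only
    rw [real_inner_self_eq_norm_sq, real_inner_comm (b ν₀) (b ν)]
    linarith
  · intro c
    simp only [sub_two_mul_inner_add_norm_sq, sub_self, norm_zero]
    linarith [sq_nonneg ‖c - b ν₀‖]
  · intro c
    have hcont : Continuous fun ν => A ν - 2 * ⟪b ν, c⟫ + ‖c‖ ^ 2 := by fun_prop
    have := (hcomp.image hcont).bddAbove
    rwa [image_eq_range] at this
  · rintro ⟨ν, -⟩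
    refine ⟨A ν - ‖b ν‖ ^ 2, forall_mem_range.2 fun c => ?_⟩
    simp only [sub_two_mul_inner_add_norm_sq]
    linarith [sq_nonneg ‖c - b ν‖]

end QuadraticPayoff

section SecondMoment

variable {E : Type*} [NormedAddCommGroup E] [MeasurableSpace E] [OpensMeasurableSpace E]
  [SecondCountableTopology E] {μ : Measure E}

theorem integrable_id_of_integrable_norm_sq [IsFiniteMeasure μ]
    (h : Integrable (fun x => ‖x‖ ^ 2) μ) : Integrable id μ :=
  ((memLp_two_iff_integrable_sq_norm aestronglyMeasurable_id).2 h).integrable one_le_two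

theorem integral_norm_sub_sq [InnerProductSpace ℝ E] [CompleteSpace E] [IsProbabilityMeasure μ]
    (h : Integrable (fun x => ‖x‖ ^ 2) μ) (c : E) :
    ∫ x, ‖x - c‖ ^ 2 ∂μ = ∫ x, ‖x‖ ^ 2 ∂μ - 2 * ⟪∫ x, x ∂μ, c⟫ + ‖c‖ ^ 2 := by
  have hinner : Integrable (fun x => ⟪x, c⟫) μ :=
    (integrable_id_of_integrable_norm_sq h).inner_const c
  have hmean : ∫ x, ⟪x, c⟫ ∂μ = ⟪∫ x, x ∂μ, c⟫ := by
    simp_rw [real_inner_comm c]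
    exact integral_inner (integrable_id_of_integrable_norm_sq h) c
  simp_rw [norm_sub_sq_real]
  rw [integral_add (f := fun x => ‖x‖ ^ 2 - 2 * ⟪x, c⟫) (h.sub (hinner.const_mul 2))
    (integrable_const _), integral_sub h (hinner.const_mul 2), integral_const_mul, hmean]
  simp

end SecondMoment

theorem stmt9 {n m : ℕ}
    (p : Fin m → Measure (EuclideanSpace ℝ (Fin n)))
    (hprob : ∀ i, IsProbabilityMeasure (p i))
    (hp2 : ∀ i, Integrable (fun x => ‖x‖ ^ 2) (p i))
    (B : Set (Fin m → ℝ)) (hBne : B.Nonempty)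
    (hBconv : Convex ℝ B) (hBcomp : IsCompact B)
    (hBsimplex : B ⊆ {ν : Fin m → ℝ | (∀ i, 0 ≤ ν i) ∧ ∑ i, ν i = 1})
    (V : EuclideanSpace ℝ (Fin n) → (Fin m → ℝ) → ℝ)
    (hV : ∀ c ν, V c ν = ∑ i, ν i * ∫ x, ‖x - c‖ ^ 2 ∂(p i)) :
    ⨅ c : EuclideanSpace ℝ (Fin n), ⨆ ν : B, V c ν
      = ⨆ ν : B, ⨅ c : EuclideanSpace ℝ (Fin n), V c ν := by
  let A := (LinearMap.toContinuousLinearMap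
    (Fintype.linearCombination ℝ fun i => ∫ x, ‖x‖ ^ 2 ∂(p i))).toContinuousAffineMap
  let b := (LinearMap.toContinuousLinearMap
    (Fintype.linearCombination ℝ fun i => ∫ x, x ∂(p i))).toContinuousAffineMap
  have hVB : ∀ c, ∀ ν : B, V c ν = A ν - 2 * ⟪b ν, c⟫ + ‖c‖ ^ 2 := by
    rintro c ⟨ν, hν⟩
    simp only [A, b, hV, ContinuousLinearMap.coe_toContinuousAffineMap,
      LinearMap.coe_toContinuousLinearMap', Fintype.linearCombination_apply]
    calc ∑ i, ν i * ∫ x, ‖x - c‖ ^ 2 ∂p i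
        = ∑ i, (ν i • ∫ x, ‖x‖ ^ 2 ∂p i - 2 * ⟪ν i • ∫ x, x ∂p i, c⟫ + ν i * ‖c‖ ^ 2) :=
          Finset.sum_congr rfl fun i _ => by
            have := hprob i
            rw [integral_norm_sub_sq (hp2 i), real_inner_smul_left, smul_eq_mul]
            ring
      _ = _ := by
        rw [Finset.sum_add_distrib, Finset.sum_sub_distrib, ← Finset.sum_mul, (hBsimplex hν).2,
          ← Finset.mul_sum, sum_inner, one_mul]
  simp_rw [hVB]
  exact iInf_iSup_quadratic_eq_iSup_iInf hBne hBconv hBcomp A b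
end

section
/- Let Θ be a finite set, μ a probability distribution on Θ, R ∈ [0,1], L : Θ → ℝ, and suppose L takes exactly two values L_max > L_min with Θmax the set of maximizers. Then the maximum of ∑_θ ν(θ)L(θ) over the TV ball of radius R around μ equals ∑_θ μ(θ)L(θ) + α·(L_max − L_min), where α = min(R, 1 − μ(Θmax)). -/
open Finset

/-!
Write `S = Θmax` and `m = μ(S)`. As `L` only takes the values `L_min` and `L_max`, the expectation
of `L` under a distribution `ν` is `L_min + ν(S) (L_max - L_min)`, so the problem is to maximise
the mass `ν(S)` over the TV ball. Mass can only be gained on `S` by losing it on `Sᶜ`, so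
`ν(S) - m ≤ tvDist ν μ ≤ R`, and of course `ν(S) ≤ 1`. The bound `m + min R (1 - m)` is attained
on the segment from `μ` to the distribution obtained by moving all of the mass of `Sᶜ` onto one
point of `S`, whose TV distance to `μ` grows linearly along the segment up to `1 - m`.
-/

theorem exists_mem_Icc_mul_eq_of_le {a b : ℝ} (ha : 0 ≤ a) (hab : a ≤ b) :
    ∃ t ∈ Set.Icc (0 : ℝ) 1, t * b = a := by
  rcases (ha.trans hab).eq_or_lt with hb | hb
  · exact ⟨0, by simp, by linarith⟩
  · exact ⟨a / b, ⟨div_nonneg ha hb.le, div_le_one_of_le₀ hab hb.le⟩, div_mul_cancel₀ a hb.ne'⟩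

section

variable {Θ : Type*} [Fintype Θ]

theorem sum_mul_eq_of_forall_eq_or_eq (ν L : Θ → ℝ) {a b : ℝ} (hL : ∀ θ, L θ = a ∨ L θ = b)
    [DecidablePred fun θ => L θ = b] :
    ∑ θ, ν θ * L θ = a * ∑ θ, ν θ + (b - a) * ∑ θ ∈ univ.filter (fun θ => L θ = b), ν θ := by
  have hL' : ∀ θ, L θ = a + (b - a) * if L θ = b then 1 else 0 := fun θ => by
    split_ifs with h
    · rw [h]; ring
    · rw [(hL θ).resolve_right h]; ring
  simp_rw [sum_filter, mul_sum, ← sum_add_distrib]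
  refine sum_congr rfl fun θ _ => ?_
  conv_lhs => rw [hL' θ]
  split_ifs <;> ring

theorem sum_sub_sum_le_tvDist {ν μ : Θ → ℝ} (h : ∑ θ, ν θ = ∑ θ, μ θ) (S : Finset Θ) :
    ∑ θ ∈ S, ν θ - ∑ θ ∈ S, μ θ ≤ tvDist ν μ := by
  classical
  have hgain : ∑ θ ∈ S, (ν θ - μ θ) = ∑ θ ∈ Sᶜ, (μ θ - ν θ) := by
    simp only [sum_sub_distrib]
    linarith [sum_add_sum_compl S ν, sum_add_sum_compl S μ]
  have hS : ∑ θ ∈ S, (ν θ - μ θ) ≤ ∑ θ ∈ S, |ν θ - μ θ| :=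
    sum_le_sum fun θ _ => le_abs_self _
  have hSc : ∑ θ ∈ Sᶜ, (μ θ - ν θ) ≤ ∑ θ ∈ Sᶜ, |ν θ - μ θ| :=
    sum_le_sum fun θ _ => (le_abs_self _).trans_eq (abs_sub_comm _ _)
  rw [tvDist, ← sum_add_sum_compl S, ← sum_sub_distrib]
  linarith

theorem tvDist_add_mul_sub {π μ : Θ → ℝ} {t : ℝ} (ht : 0 ≤ t) :
    tvDist (fun θ => μ θ + t * (π θ - μ θ)) μ = t * tvDist π μ := by
  simp only [tvDist, add_sub_cancel_left, abs_mul, abs_of_nonneg ht, ← mul_sum]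
  ring

theorem IsProbDist.add_mul_sub {π μ : Θ → ℝ} (hμ : IsProbDist μ) (hπ : IsProbDist π) {t : ℝ}
    (ht : t ∈ Set.Icc (0 : ℝ) 1) : IsProbDist fun θ => μ θ + t * (π θ - μ θ) := by
  refine ⟨fun θ => ?_, ?_⟩
  · nlinarith [hμ.1 θ, hπ.1 θ, ht.1, ht.2]
  · rw [sum_add_distrib, ← mul_sum, sum_sub_distrib, hμ.2, hπ.2]
    ring

theorem IsProbDist.sum_le_one {μ : Θ → ℝ} (hμ : IsProbDist μ) (S : Finset Θ) :
    ∑ θ ∈ S, μ θ ≤ 1 :=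
  hμ.2 ▸ sum_le_sum_of_subset_of_nonneg (subset_univ S) fun θ _ _ => hμ.1 θ

theorem sum_le_of_tvDist_le {ν μ : Θ → ℝ} {R : ℝ} (hν : IsProbDist ν) (hμ : IsProbDist μ)
    (hR : tvDist ν μ ≤ R) (S : Finset Θ) :
    ∑ θ ∈ S, ν θ ≤ ∑ θ ∈ S, μ θ + min R (1 - ∑ θ ∈ S, μ θ) := by
  have := le_min ((sum_sub_sum_le_tvDist (hν.2.trans hμ.2.symm) S).trans hR)
    (sub_le_sub_right (hν.sum_le_one S) (∑ θ ∈ S, μ θ))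
  linarith

variable [DecidableEq Θ]

/-- `μ` with all of its mass outside `S` moved to the point `θ₀`. -/
def sweepOnto (μ : Θ → ℝ) (S : Finset Θ) (θ₀ : Θ) : Θ → ℝ :=
  fun θ => (if θ ∈ S then μ θ else 0) + if θ = θ₀ then ∑ θ ∈ Sᶜ, μ θ else 0

variable {μ : Θ → ℝ} {S : Finset Θ} {θ₀ : Θ}

theorem sum_sweepOnto (hθ₀ : θ₀ ∈ S) : ∑ θ ∈ S, sweepOnto μ S θ₀ θ = ∑ θ, μ θ := by
  simp only [sweepOnto, sum_add_distrib, sum_ite_mem, inter_self, sum_ite_eq', if_pos hθ₀]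
  exact sum_add_sum_compl S μ

theorem isProbDist_sweepOnto (hμ : IsProbDist μ) (hθ₀ : θ₀ ∈ S) :
    IsProbDist (sweepOnto μ S θ₀) := by
  refine ⟨fun θ => ?_, ?_⟩
  · have := sum_nonneg fun θ (_ : θ ∈ Sᶜ) => hμ.1 θ
    unfold sweepOnto
    split_ifs <;> linarith [hμ.1 θ]
  · rw [← sum_add_sum_compl S, sum_sweepOnto hθ₀, hμ.2, add_eq_left]
    refine sum_eq_zero fun θ hθ => ?_
    have hθ' : θ ∉ S := mem_compl.1 hθ
    simp [sweepOnto, hθ', ne_of_mem_of_not_mem hθ₀ hθ' |>.symm]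

theorem tvDist_sweepOnto (hμ : ∀ θ, 0 ≤ μ θ) (hθ₀ : θ₀ ∈ S) :
    tvDist (sweepOnto μ S θ₀) μ = ∑ θ ∈ Sᶜ, μ θ := by
  have hin : ∀ θ ∈ S, |sweepOnto μ S θ₀ θ - μ θ| = if θ = θ₀ then ∑ θ ∈ Sᶜ, μ θ else 0 :=
    fun θ hθ => by
      simp only [sweepOnto, if_pos hθ, add_sub_cancel_left]
      exact abs_of_nonneg (by split_ifs <;> simp [sum_nonneg, hμ])
  have hout : ∀ θ ∈ Sᶜ, |sweepOnto μ S θ₀ θ - μ θ| = μ θ := fun θ hθ => by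
    have hθ' : θ ∉ S := mem_compl.1 hθ
    simp [sweepOnto, hθ', ne_of_mem_of_not_mem hθ₀ hθ' |>.symm, hμ θ]
  rw [tvDist, ← sum_add_sum_compl S, sum_congr rfl hin, sum_congr rfl hout, sum_ite_eq',
    if_pos hθ₀]
  ring

end

theorem exists_sum_eq_of_tvDist_le {Θ : Type*} [Fintype Θ] {μ : Θ → ℝ} {R : ℝ}
    (hμ : IsProbDist μ) (hR : 0 ≤ R) {S : Finset Θ} {θ₀ : Θ} (hθ₀ : θ₀ ∈ S) :
    ∃ ν, IsProbDist ν ∧ tvDist ν μ ≤ R ∧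
      ∑ θ ∈ S, ν θ = ∑ θ ∈ S, μ θ + min R (1 - ∑ θ ∈ S, μ θ) := by
  classical
  set m := ∑ θ ∈ S, μ θ
  have hm : m ≤ 1 := hμ.sum_le_one S
  have hcompl : ∑ θ ∈ Sᶜ, μ θ = 1 - m := by linarith [sum_add_sum_compl S μ, hμ.2]
  obtain ⟨t, ht, htα⟩ :=
    exists_mem_Icc_mul_eq_of_le (le_min hR (sub_nonneg.2 hm)) (min_le_right R (1 - m))
  refine ⟨fun θ => μ θ + t * (sweepOnto μ S θ₀ θ - μ θ),
    hμ.add_mul_sub (isProbDist_sweepOnto hμ hθ₀) ht, ?_, ?_⟩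
  · rw [tvDist_add_mul_sub ht.1, tvDist_sweepOnto hμ.1 hθ₀, hcompl, htα]
    exact min_le_left _ _
  · rw [sum_add_distrib, ← mul_sum, sum_sub_distrib, sum_sweepOnto hθ₀, hμ.2, ← htα]

open scoped Classical in
theorem stmt14_general {Θ : Type*} [Fintype Θ]
    (μ : Θ → ℝ) (hμ : IsProbDist μ) (R : ℝ) (hR : R ∈ Set.Icc (0 : ℝ) 1)
    (L : Θ → ℝ) (Lmax Lmin : ℝ) (hlt : Lmin < Lmax)
    (hvals : ∀ θ, L θ = Lmin ∨ L θ = Lmax)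
    (hmaxne : ∃ θ, L θ = Lmax)
    (α : ℝ)
    (hα : α = min R (1 - ∑ θ ∈ Finset.univ.filter (fun θ => L θ = Lmax), μ θ)) :
    sSup {x : ℝ | ∃ ν : Θ → ℝ, IsProbDist ν ∧ tvDist ν μ ≤ R ∧ x = ∑ θ, ν θ * L θ}
      = ∑ θ, μ θ * L θ + α * (Lmax - Lmin) := by
  set S := univ.filter fun θ => L θ = Lmax
  have hvalue : ∀ ν, IsProbDist ν → ∑ θ, ν θ * L θ = Lmin + (Lmax - Lmin) * ∑ θ ∈ S, ν θ :=
    fun ν hν => by rw [sum_mul_eq_of_forall_eq_or_eq ν L hvals, hν.2, mul_one]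
  obtain ⟨θ₀, hθ₀⟩ := hmaxne
  refine IsGreatest.csSup_eq ⟨?_, ?_⟩
  · obtain ⟨ν, hν, htv, hsum⟩ :=
      exists_sum_eq_of_tvDist_le hμ hR.1 (S := S) (mem_filter.2 ⟨mem_univ θ₀, hθ₀⟩)
    refine ⟨ν, hν, htv, ?_⟩
    rw [hvalue ν hν, hsum, hvalue μ hμ, hα]
    ring
  · rintro _ ⟨ν, hν, htv, rfl⟩
    rw [hvalue ν hν, hvalue μ hμ, hα]
    have := mul_le_mul_of_nonneg_left (sum_le_of_tvDist_le hν hμ htv S) (sub_nonneg.2 hlt.le)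
    linarith

open scoped Classical in
theorem stmt14 {Θ : Type*} [Fintype Θ]
    (μ : Θ → ℝ) (hμ : IsProbDist μ) (R : ℝ) (hR : R ∈ Set.Icc (0 : ℝ) 1)
    (L : Θ → ℝ) (Lmax Lmin : ℝ) (hlt : Lmin < Lmax)
    (hvals : ∀ θ, L θ = Lmin ∨ L θ = Lmax)
    (hmaxne : ∃ θ, L θ = Lmax) (hminne : ∃ θ, L θ = Lmin)
    (α : ℝ)
    (hα : α = min R (1 - ∑ θ ∈ Finset.univ.filter (fun θ => L θ = Lmax), μ θ)) :
    sSup {x : ℝ | ∃ ν : Θ → ℝ, IsProbDist ν ∧ tvDist ν μ ≤ R ∧ x = ∑ θ, ν θ * L θ}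
      = ∑ θ, μ θ * L θ + α * (Lmax - Lmin) :=
  stmt14_general μ hμ R hR L Lmax Lmin hlt hvals hmaxne α hα
end
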